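/- arXiv:1209.6275 — 3 statements merged into one kernel-verified Lean document; each statement's English description precedes it below -/
import Mathlib

section
/- If v is a smooth solution of the Sturm-Liouville problem -(v' φ γ)' = λ v φ γ on (α,β) with v'(α)φ(α) = v'(β)φ(β) = 0, where γ(x) = e^{-x²/2} and φ is a positive C² function, then the function w = v' φ^{1/2} satisfies -w'' + x w' + w[ -φ''/(2φ) + (3/4)(φ'/φ)² - (x/2)(φ'/φ) ] = (λ - 1) w on (α,β) with w(α) = w(β) = 0. -/
/-!
Dividing the equation `-(v' φ γ)' = λ v φ γ` by `γ` gives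
`(v' φ)' - x v' φ + λ v φ = 0`; differentiating once more and eliminating `v` with the
undifferentiated equation yields a second-order equation for `u = v'` alone,
`-u'' - (φ'/φ) u' + x u' + ((φ'/φ)² - φ''/φ) u = (λ - 1) u`.
The Liouville substitution `w = u √φ` absorbs the first-order term `(φ'/φ) u'` and produces
the stated potential. The Neumann conditions become Dirichlet ones because `φ > 0` at the ends.
-/

open Real Set Filter Topology

theorem hasDerivAt_exp_neg_sq_div_two (x : ℝ) :
    HasDerivAt (fun t => exp (-t ^ 2 / 2)) (-x * exp (-x ^ 2 / 2)) x := by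
  have h : HasDerivAt (fun t : ℝ => -t ^ 2 / 2) (-x) x :=
    ((hasDerivAt_pow 2 x).neg.div_const 2).congr_deriv (by ring)
  simpa only [mul_comm] using h.exp

theorem deriv_mul_exp_neg_sq_div_two {g : ℝ → ℝ} {g' x : ℝ} (hg : HasDerivAt g g' x) :
    deriv (fun t => g t * exp (-t ^ 2 / 2)) x = (g' - x * g x) * exp (-x ^ 2 / 2) := by
  rw [(hg.fun_mul (hasDerivAt_exp_neg_sq_div_two x)).deriv]
  ring

theorem ContDiff.hasDerivAt {f : ℝ → ℝ} {n : WithTop ℕ∞} (hf : ContDiff ℝ n f) (hn : n ≠ 0)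
    (x : ℝ) :
    HasDerivAt f (deriv f x) x :=
  (hf.differentiable hn x).hasDerivAt

section SturmLiouville

variable {U : Set ℝ} {lam : ℝ} {φ v : ℝ → ℝ}

theorem sturmLiouville_gaussian_expanded (hφ : ContDiff ℝ 2 φ) (hv : ContDiff ℝ 3 v)
    (heq : ∀ x ∈ U, -(deriv (fun t => deriv v t * φ t * exp (-t ^ 2 / 2)) x)
      = lam * v x * φ x * exp (-x ^ 2 / 2)) {x : ℝ} (hx : x ∈ U) :
    deriv (deriv v) x * φ x + deriv v x * deriv φ x - x * (deriv v x * φ x)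
      + lam * v x * φ x = 0 := by
  have h := heq x hx
  rw [deriv_mul_exp_neg_sq_div_two (g := fun t => deriv v t * φ t)
    ((hv.deriv' (n := 2).hasDerivAt two_ne_zero x).fun_mul (hφ.hasDerivAt two_ne_zero x))] at h
  have h' : (deriv (deriv v) x * φ x + deriv v x * deriv φ x - x * (deriv v x * φ x)
      + lam * v x * φ x) * exp (-x ^ 2 / 2) = 0 := by linear_combination -h
  exact (mul_eq_zero.mp h').resolve_right (exp_pos _).ne'

theorem deriv_sturmLiouville_gaussian (hU : IsOpen U) (hφ : ContDiff ℝ 2 φ) (hv : ContDiff ℝ 3 v)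
    (heq : ∀ x ∈ U, -(deriv (fun t => deriv v t * φ t * exp (-t ^ 2 / 2)) x)
      = lam * v x * φ x * exp (-x ^ 2 / 2)) {x : ℝ} (hx : x ∈ U) (hφx : φ x ≠ 0) :
    -deriv (deriv (deriv v)) x - deriv φ x / φ x * deriv (deriv v) x + x * deriv (deriv v) x
      + ((deriv φ x / φ x) ^ 2 - deriv (deriv φ) x / φ x) * deriv v x
      = (lam - 1) * deriv v x := by
  have hv1 : ContDiff ℝ 1 (deriv (deriv v)) := hv.deriv'.deriv'
  have hderiv : HasDerivAt
      (fun y => deriv (deriv v) y * φ y + deriv v y * deriv φ y - y * (deriv v y * φ y)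
        + lam * v y * φ y)
      (deriv (deriv (deriv v)) x * φ x + deriv (deriv v) x * deriv φ x
        + (deriv (deriv v) x * deriv φ x + deriv v x * deriv (deriv φ) x)
        - (1 * (deriv v x * φ x) + x * (deriv (deriv v) x * φ x + deriv v x * deriv φ x))
        + (lam * deriv v x * φ x + lam * v x * deriv φ x)) x := by
    have Dφ := hφ.hasDerivAt two_ne_zero x
    have Dv := hv.hasDerivAt three_ne_zero x
    have Dv' := hv.deriv' (n := 2).hasDerivAt two_ne_zero x
    exact ((((hv1.hasDerivAt one_ne_zero x).fun_mul Dφ).fun_add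
      (Dv'.fun_mul (hφ.deriv' (n := 1).hasDerivAt one_ne_zero x))).fun_sub
      ((hasDerivAt_id x).fun_mul (Dv'.fun_mul Dφ))).fun_add ((Dv.const_mul lam).fun_mul Dφ)
  have hderiv_zero := hderiv.unique <| (hasDerivAt_const x (0 : ℝ)).congr_of_eventuallyEq <|
    eventually_of_mem (hU.mem_nhds hx) fun y hy => sturmLiouville_gaussian_expanded hφ hv heq hy
  have h0 := sturmLiouville_gaussian_expanded hφ hv heq hx
  field_simp
  -- `h0` eliminates `λ v φ'`, the only occurrence of `v` in the differentiated equation.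
  linear_combination (-φ x) * hderiv_zero + deriv φ x * h0

end SturmLiouville

theorem liouville_transform_mul_sqrt {u φ w : ℝ → ℝ} (hu : ContDiff ℝ 2 u) (hφ : ContDiff ℝ 2 φ)
    (hw : w = fun t => u t * √(φ t)) {x : ℝ} (hφx : 0 < φ x) :
    -deriv (deriv w) x + x * deriv w x
      + w x * (-(deriv (deriv φ) x) / (2 * φ x) + 3/4 * (deriv φ x / φ x)^2
        - x/2 * (deriv φ x / φ x))
      = √(φ x) * (-deriv (deriv u) x - deriv φ x / φ x * deriv u x + x * deriv u x
        + ((deriv φ x / φ x) ^ 2 - deriv (deriv φ) x / φ x) * u x) := by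
  have Du := hu.hasDerivAt two_ne_zero
  have Du' := hu.deriv' (n := 1).hasDerivAt one_ne_zero
  have Dφ := hφ.hasDerivAt two_ne_zero
  have Dφ' := hφ.deriv' (n := 1).hasDerivAt one_ne_zero
  have hw' : ∀ y, 0 < φ y → HasDerivAt w
      (deriv u y * √(φ y) + u y * (deriv φ y / (2 * √(φ y)))) y := fun y hy =>
    hw ▸ (Du y).fun_mul ((Dφ y).sqrt hy.ne')
  have hw'' : HasDerivAt (deriv w)
      (deriv (deriv u) x * √(φ x) + deriv u x * (deriv φ x / (2 * √(φ x)))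
        + (deriv u x * (deriv φ x / (2 * √(φ x)))
          + u x * ((deriv (deriv φ) x * (2 * √(φ x))
            - deriv φ x * (2 * (deriv φ x / (2 * √(φ x))))) / (2 * √(φ x)) ^ 2))) x := by
    have hpos : ∀ᶠ y in 𝓝 x, 0 < φ y := continuousAt_const.eventually_lt
      hφ.continuous.continuousAt hφx
    refine HasDerivAt.congr_of_eventuallyEq ?_ (hpos.mono fun y hy => (hw' y hy).deriv)
    exact ((Du' x).fun_mul ((Dφ x).sqrt hφx.ne')).fun_add
      ((Du x).fun_mul ((Dφ' x).fun_div (((Dφ x).sqrt hφx.ne').const_mul 2) (by positivity)))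
  rw [hw''.deriv, (hw' x hφx).deriv, hw]
  have hs : 0 < √(φ x) := sqrt_pos.mpr hφx
  have hφs : φ x = √(φ x) ^ 2 := (sq_sqrt hφx.le).symm
  set s := √(φ x)
  rw [hφs]
  field_simp
  ring

/-- The substitution `w = v' φ^{1/2}` transforms a solution of the weighted Neumann
Sturm–Liouville problem `-(v' φ γ)' = λ v φ γ`, `v'(α)φ(α) = v'(β)φ(β) = 0`
(where `γ(x) = e^{-x²/2}`) into a solution of the Dirichlet problem
`-w'' + x w' + w[-φ''/(2φ) + (3/4)(φ'/φ)² - (x/2)(φ'/φ)] = (λ-1) w`, `w(α) = w(β) = 0`. -/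
theorem stmt2 (α β lam : ℝ) (hab : α < β) (φ v : ℝ → ℝ)
    (hφ : ContDiff ℝ 2 φ) (hφpos : ∀ x ∈ Set.Icc α β, 0 < φ x)
    (hv : ContDiff ℝ 3 v)
    (heq : ∀ x ∈ Set.Ioo α β,
      -(deriv (fun t => deriv v t * φ t * Real.exp (-t^2/2)) x)
        = lam * v x * φ x * Real.exp (-x^2/2))
    (hbc1 : deriv v α * φ α = 0) (hbc2 : deriv v β * φ β = 0) :
    let w : ℝ → ℝ := fun x => deriv v x * Real.sqrt (φ x)
    (∀ x ∈ Set.Ioo α β,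
      -(deriv (deriv w) x) + x * deriv w x
        + w x * (-(deriv (deriv φ) x) / (2 * φ x) + 3/4 * (deriv φ x / φ x)^2
            - x/2 * (deriv φ x / φ x))
        = (lam - 1) * w x) ∧ w α = 0 ∧ w β = 0 := by
  intro w
  have hw_zero {y : ℝ} (hy : y ∈ Icc α β) (hbc : deriv v y * φ y = 0) : w y = 0 := by
    simp [w, (mul_eq_zero.mp hbc).resolve_right (hφpos y hy).ne']
  refine ⟨fun x hx => ?_, hw_zero (left_mem_Icc.mpr hab.le) hbc1,
    hw_zero (right_mem_Icc.mpr hab.le) hbc2⟩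
  have hφx := hφpos x (Ioo_subset_Icc_self hx)
  rw [liouville_transform_mul_sqrt hv.deriv' hφ rfl hφx,
    deriv_sturmLiouville_gaussian isOpen_Ioo hφ hv heq hx hφx.ne']
  ring
end

section
/- The first Neumann eigenvalue μ₁(a,b) of the one-dimensional Hermite operator on an interval (a,b) satisfies μ₁(a,b) = λ₁(a,b) + 1, where λ₁(a,b) is the first Dirichlet eigenvalue of the Hermite operator on (a,b). -/
open Real MeasureTheory

/-- The one-dimensional standard Gaussian density. -/
noncomputable def gauss (x : ℝ) : ℝ := (2 * π) ^ (-(1:ℝ)/2) * Real.exp (-x^2/2)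

/-- The Gaussian Rayleigh quotient of `z` on the interval `(a,b)`. -/
noncomputable def RayN (a b : ℝ) (z : ℝ → ℝ) : ℝ :=
  (∫ x in Set.Ioo a b, (deriv z x)^2 * gauss x) / (∫ x in Set.Ioo a b, (z x)^2 * gauss x)

/-- The first nontrivial Neumann eigenvalue `μ₁(a,b)` of the Hermite operator `-v'' + x v'`
on `(a,b)`, via its variational characterization: the infimum of the Gaussian Rayleigh
quotient over nonzero functions with zero Gaussian mean. -/
noncomputable def neuEig (a b : ℝ) : ℝ :=
  sInf {r | ∃ z : ℝ → ℝ, ContDiff ℝ 1 z ∧ (∫ x in Set.Ioo a b, z x * gauss x) = 0 ∧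
    (∫ x in Set.Ioo a b, (z x)^2 * gauss x) ≠ 0 ∧ r = RayN a b z}

/-- The first Dirichlet eigenvalue `λ₁(a,b)` of the Hermite operator `-w'' + x w'`
on `(a,b)`, via its variational characterization over nonzero functions vanishing
at the endpoints. -/
noncomputable def dirEig (a b : ℝ) : ℝ :=
  sInf {r | ∃ w : ℝ → ℝ, ContDiff ℝ 1 w ∧ w a = 0 ∧ w b = 0 ∧
    (∫ x in Set.Ioo a b, (w x)^2 * gauss x) ≠ 0 ∧ r = RayN a b w}

/-!
Write `⟨f, g⟩ = ∫ₐᵇ f g dγ` and let `δw = x w - w'`, the adjoint of `d/dx` on functions vanishing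
at `a` and `b`. For such `w`, `(δw)² γ = (w'² + w²) γ - (x w² γ)'`, so `‖δw‖² = ‖w'‖² + ‖w‖²`.

If `z` has Gaussian mean zero, `w = -γ⁻¹ ∫ₐˣ z γ` vanishes at both ends and `δw = z`, so
`‖z‖² = ⟨z', w⟩ ≤ ‖z'‖ ‖w‖` while `‖z‖² = ‖w'‖² + ‖w‖² ≥ (λ₁ + 1) ‖w‖²`; hence `R(z) ≥ λ₁ + 1`.
Conversely, if `w` vanishes at both ends and `z` is a primitive of `w` with Gaussian mean zero,
then `‖w‖² = ⟨z', w⟩ = ⟨z, δw⟩ ≤ ‖z‖ (‖w'‖² + ‖w‖²)^½`, i.e. `R(z) ≤ R(w) + 1`.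
-/

open Set

lemma gauss_pos (x : ℝ) : 0 < gauss x := by
  unfold gauss; positivity

lemma hasDerivAt_gauss (x : ℝ) : HasDerivAt gauss (-x * gauss x) x := by
  have hexp : HasDerivAt (fun y : ℝ => -y ^ 2 / 2) (-x) x := by
    simpa [neg_div] using (hasDerivAt_pow 2 x).neg.div_const 2
  exact (hexp.exp.const_mul _).congr_deriv (by unfold gauss; ring)

@[fun_prop]
lemma continuous_gauss : Continuous gauss := by
  unfold gauss; fun_prop

lemma Continuous.integrableOn_Ioo {E : Type*} [NormedAddCommGroup E] {μ : Measure ℝ}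
    [IsLocallyFiniteMeasure μ] {f : ℝ → E} (hf : Continuous f) {a b : ℝ} :
    IntegrableOn f (Ioo a b) μ :=
  hf.integrableOn_Icc.mono_set Ioo_subset_Icc_self

lemma integral_Ioo_eq_sub_of_hasDerivAt {a b : ℝ} (hab : a ≤ b) {F f : ℝ → ℝ}
    (hF : ∀ x, HasDerivAt F (f x) x) (hf : Continuous f) :
    ∫ x in Ioo a b, f x = F b - F a := by
  rw [← integral_Ioc_eq_integral_Ioo, ← intervalIntegral.integral_of_le hab]
  exact intervalIntegral.integral_eq_sub_of_hasDerivAt (fun x _ => hF x) (hf.intervalIntegrable a b)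

lemma integral_Ioo_pos_of_pos_on {a b : ℝ} (hab : a < b) {f : ℝ → ℝ} (hf : Continuous f)
    (hpos : ∀ x ∈ Ioo a b, 0 < f x) : 0 < ∫ x in Ioo a b, f x := by
  rw [← integral_Ioc_eq_integral_Ioo, ← intervalIntegral.integral_of_le hab.le]
  exact intervalIntegral.intervalIntegral_pos_of_pos_on (hf.intervalIntegrable a b) hpos hab

lemma sq_integral_mul_le {α : Type*} [MeasurableSpace α] {μ : Measure α} {f g ρ : α → ℝ}
    (hρ : 0 ≤ ρ) (hf : Integrable (fun x => f x ^ 2 * ρ x) μ)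
    (hg : Integrable (fun x => g x ^ 2 * ρ x) μ) (hfg : Integrable (fun x => f x * g x * ρ x) μ) :
    (∫ x, f x * g x * ρ x ∂μ) ^ 2 ≤ (∫ x, f x ^ 2 * ρ x ∂μ) * ∫ x, g x ^ 2 * ρ x ∂μ := by
  have hquad : ∀ t : ℝ, 0 ≤ (∫ x, g x ^ 2 * ρ x ∂μ) * (t * t)
      + 2 * (∫ x, f x * g x * ρ x ∂μ) * t + ∫ x, f x ^ 2 * ρ x ∂μ := by
    intro t
    have hexp : ∫ x, (f x + t * g x) ^ 2 * ρ x ∂μ = (∫ x, g x ^ 2 * ρ x ∂μ) * (t * t)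
        + 2 * (∫ x, f x * g x * ρ x ∂μ) * t + ∫ x, f x ^ 2 * ρ x ∂μ := by
      have hpt : ∀ x, (f x + t * g x) ^ 2 * ρ x
          = (t * t) * (g x ^ 2 * ρ x) + (2 * t) * (f x * g x * ρ x) + f x ^ 2 * ρ x :=
        fun x => by ring
      simp_rw [hpt]
      rw [integral_add (by exact (hg.const_mul _).add (hfg.const_mul _)) hf,
        integral_add (hg.const_mul _) (hfg.const_mul _), integral_const_mul, integral_const_mul]
      ring
    rw [← hexp]
    exact integral_nonneg fun x => mul_nonneg (sq_nonneg _) (hρ x)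
  have := discrim_le_zero hquad
  unfold discrim at this
  nlinarith

lemma integral_sq_mul_gauss_nonneg (a b : ℝ) (f : ℝ → ℝ) :
    0 ≤ ∫ x in Ioo a b, f x ^ 2 * gauss x :=
  setIntegral_nonneg measurableSet_Ioo fun x _ => mul_nonneg (sq_nonneg _) (gauss_pos x).le

lemma rayN_nonneg (a b : ℝ) (z : ℝ → ℝ) : 0 ≤ RayN a b z :=
  div_nonneg (integral_sq_mul_gauss_nonneg a b _) (integral_sq_mul_gauss_nonneg a b _)

lemma sq_integral_mul_gauss_le {a b : ℝ} {f g : ℝ → ℝ} (hf : Continuous f) (hg : Continuous g) :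
    (∫ x in Ioo a b, f x * g x * gauss x) ^ 2
      ≤ (∫ x in Ioo a b, f x ^ 2 * gauss x) * ∫ x in Ioo a b, g x ^ 2 * gauss x :=
  sq_integral_mul_le (fun x => (gauss_pos x).le) (by fun_prop : Continuous _).integrableOn_Ioo
    (by fun_prop : Continuous _).integrableOn_Ioo (by fun_prop : Continuous _).integrableOn_Ioo

/-- The Gaussian divergence `δw = x w - w'`: for `w` vanishing at the endpoints it is the adjoint
of `d/dx` in `L²(γ)`. -/
noncomputable def gaussDiv (w : ℝ → ℝ) (x : ℝ) : ℝ := x * w x - deriv w x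

lemma ContDiff.continuous_gaussDiv {w : ℝ → ℝ} (hw : ContDiff ℝ 1 w) : Continuous (gaussDiv w) := by
  have := hw.continuous_deriv le_rfl
  unfold gaussDiv; fun_prop

lemma integral_deriv_mul_mul_gauss {a b : ℝ} (hab : a ≤ b) {z w : ℝ → ℝ} (hz : ContDiff ℝ 1 z)
    (hw : ContDiff ℝ 1 w) (hwa : w a = 0) (hwb : w b = 0) :
    ∫ x in Ioo a b, deriv z x * w x * gauss x = ∫ x in Ioo a b, z x * gaussDiv w x * gauss x := by
  have hz' := hz.continuous_deriv le_rfl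
  have hδ := hw.continuous_gaussDiv
  have hw₀ := hw.continuous
  have hprod : ∀ x, HasDerivAt (fun y => z y * w y * gauss y)
      (deriv z x * w x * gauss x - z x * gaussDiv w x * gauss x) x := fun x =>
    (((hz.differentiable one_ne_zero x).hasDerivAt.mul
      (hw.differentiable one_ne_zero x).hasDerivAt).mul (hasDerivAt_gauss x)).congr_deriv
      (by simp only [gaussDiv, Pi.mul_apply]; ring)
  have h := integral_Ioo_eq_sub_of_hasDerivAt hab hprod (by fun_prop)
  rw [integral_sub (by fun_prop : Continuous _).integrableOn_Ioo
    (by fun_prop : Continuous _).integrableOn_Ioo, hwa, hwb] at h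
  linarith

/-- The commutation relation `[d/dx, δ] = 1` behind the shift by one between the two spectra. -/
lemma integral_gaussDiv_sq {a b : ℝ} (hab : a ≤ b) {w : ℝ → ℝ} (hw : ContDiff ℝ 1 w)
    (hwa : w a = 0) (hwb : w b = 0) :
    ∫ x in Ioo a b, gaussDiv w x ^ 2 * gauss x
      = (∫ x in Ioo a b, deriv w x ^ 2 * gauss x) + ∫ x in Ioo a b, w x ^ 2 * gauss x := by
  have hw' := hw.continuous_deriv le_rfl
  have hδ := hw.continuous_gaussDiv
  have hw₀ := hw.continuous
  have hprod : ∀ x, HasDerivAt (fun y => y * w y ^ 2 * gauss y)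
      ((deriv w x ^ 2 * gauss x + w x ^ 2 * gauss x) - gaussDiv w x ^ 2 * gauss x) x := fun x =>
    (((hasDerivAt_id x).mul ((hw.differentiable one_ne_zero x).hasDerivAt.pow 2)).mul
      (hasDerivAt_gauss x)).congr_deriv (by simp only [gaussDiv, Pi.mul_apply, Pi.pow_apply, id]; ring)
  have h := integral_Ioo_eq_sub_of_hasDerivAt hab hprod (by fun_prop)
  rw [integral_sub (by fun_prop : Continuous _).integrableOn_Ioo
    (by fun_prop : Continuous _).integrableOn_Ioo, integral_add
    (by fun_prop : Continuous _).integrableOn_Ioo (by fun_prop : Continuous _).integrableOn_Ioo,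
    hwa, hwb] at h
  linarith

lemma exists_hasDerivAt_integral_mul_gauss_eq_zero {a b : ℝ} (hab : a < b) {w : ℝ → ℝ}
    (hw : Continuous w) :
    ∃ z : ℝ → ℝ, (∀ x, HasDerivAt z (w x) x) ∧ ∫ x in Ioo a b, z x * gauss x = 0 := by
  set F : ℝ → ℝ := fun x => ∫ t in a..x, w t
  have hF : ∀ x, HasDerivAt F (w x) x := fun x => (hw.integral_hasStrictDerivAt a x).hasDerivAt
  have hFc : Continuous F := continuous_iff_continuousAt.2 fun x => (hF x).continuousAt
  have hγ : 0 < ∫ x in Ioo a b, gauss x :=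
    integral_Ioo_pos_of_pos_on hab continuous_gauss fun x _ => gauss_pos x
  refine ⟨fun x => F x - (∫ x in Ioo a b, F x * gauss x) / ∫ x in Ioo a b, gauss x,
    fun x => (hF x).sub_const _, ?_⟩
  simp_rw [sub_mul]
  rw [integral_sub (by fun_prop : Continuous _).integrableOn_Ioo
    (by fun_prop : Continuous _).integrableOn_Ioo, integral_const_mul, div_mul_cancel₀ _ hγ.ne',
    sub_self]

lemma exists_gaussDiv_eq {a b : ℝ} (hab : a ≤ b) {z : ℝ → ℝ} (hz : Continuous z)
    (hmean : ∫ x in Ioo a b, z x * gauss x = 0) :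
    ∃ w : ℝ → ℝ, ContDiff ℝ 1 w ∧ w a = 0 ∧ w b = 0 ∧ gaussDiv w = z := by
  set F : ℝ → ℝ := fun x => ∫ t in a..x, z t * gauss t
  have hF : ∀ x, HasDerivAt F (z x * gauss x) x := fun x =>
    ((hz.mul continuous_gauss).integral_hasStrictDerivAt a x).hasDerivAt
  set w : ℝ → ℝ := fun x => -F x / gauss x
  have hw : ∀ x, HasDerivAt w (x * w x - z x) x := fun x =>
    ((hF x).neg.div (hasDerivAt_gauss x) (gauss_pos x).ne').congr_deriv
      (by have := (gauss_pos x).ne'; simp only [w, Pi.neg_apply]; field_simp; ring)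
  have hdw : deriv w = fun x => x * w x - z x := funext fun x => (hw x).deriv
  have hwc : Continuous w := continuous_iff_continuousAt.2 fun x => (hw x).continuousAt
  refine ⟨w, contDiff_one_iff_deriv.2 ⟨fun x => (hw x).differentiableAt, ?_⟩, by simp [w, F], ?_,
    funext fun x => by simp only [gaussDiv, hdw]; ring⟩
  · rw [hdw]; fun_prop
  · simp only [w, F, intervalIntegral.integral_of_le hab, integral_Ioc_eq_integral_Ioo, hmean]
    simp

lemma exists_dirichlet_test {a b : ℝ} (hab : a < b) :
    ∃ w : ℝ → ℝ, ContDiff ℝ 1 w ∧ w a = 0 ∧ w b = 0 ∧ ∫ x in Ioo a b, w x ^ 2 * gauss x ≠ 0 :=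
  ⟨fun x => (x - a) * (b - x), by fun_prop, by simp, by simp,
    (integral_Ioo_pos_of_pos_on hab (by fun_prop) fun x hx =>
      mul_pos (pow_pos (mul_pos (sub_pos.2 hx.1) (sub_pos.2 hx.2)) 2) (gauss_pos x)).ne'⟩

lemma neuEig_le {a b : ℝ} {z : ℝ → ℝ} (hz : ContDiff ℝ 1 z)
    (hmean : ∫ x in Ioo a b, z x * gauss x = 0) (hZ : ∫ x in Ioo a b, z x ^ 2 * gauss x ≠ 0) :
    neuEig a b ≤ RayN a b z :=
  csInf_le ⟨0, by rintro _ ⟨z, -, -, -, rfl⟩; exact rayN_nonneg a b z⟩ ⟨z, hz, hmean, hZ, rfl⟩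

lemma le_neuEig {a b c : ℝ}
    (hne : ∃ z : ℝ → ℝ, ContDiff ℝ 1 z ∧ ∫ x in Ioo a b, z x * gauss x = 0 ∧
      ∫ x in Ioo a b, z x ^ 2 * gauss x ≠ 0)
    (hc : ∀ z : ℝ → ℝ, ContDiff ℝ 1 z → ∫ x in Ioo a b, z x * gauss x = 0 →
      ∫ x in Ioo a b, z x ^ 2 * gauss x ≠ 0 → c ≤ RayN a b z) :
    c ≤ neuEig a b := by
  obtain ⟨z, hz, hmean, hZ⟩ := hne
  refine le_csInf ⟨_, z, hz, hmean, hZ, rfl⟩ ?_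
  rintro _ ⟨z, hz, hmean, hZ, rfl⟩
  exact hc z hz hmean hZ

lemma dirEig_le {a b : ℝ} {w : ℝ → ℝ} (hw : ContDiff ℝ 1 w) (hwa : w a = 0) (hwb : w b = 0)
    (hE : ∫ x in Ioo a b, w x ^ 2 * gauss x ≠ 0) :
    dirEig a b ≤ RayN a b w :=
  csInf_le ⟨0, by rintro _ ⟨w, -, -, -, -, rfl⟩; exact rayN_nonneg a b w⟩ ⟨w, hw, hwa, hwb, hE, rfl⟩

lemma le_dirEig {a b c : ℝ}
    (hne : ∃ w : ℝ → ℝ, ContDiff ℝ 1 w ∧ w a = 0 ∧ w b = 0 ∧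
      ∫ x in Ioo a b, w x ^ 2 * gauss x ≠ 0)
    (hc : ∀ w : ℝ → ℝ, ContDiff ℝ 1 w → w a = 0 → w b = 0 →
      ∫ x in Ioo a b, w x ^ 2 * gauss x ≠ 0 → c ≤ RayN a b w) :
    c ≤ dirEig a b := by
  obtain ⟨w, hw, hwa, hwb, hE⟩ := hne
  refine le_csInf ⟨_, w, hw, hwa, hwb, hE, rfl⟩ ?_
  rintro _ ⟨w, hw, hwa, hwb, hE, rfl⟩
  exact hc w hw hwa hwb hE

lemma dirEig_nonneg (a b : ℝ) : 0 ≤ dirEig a b :=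
  Real.sInf_nonneg (by rintro _ ⟨w, -, -, -, -, rfl⟩; exact rayN_nonneg a b w)

lemma exists_neumann_test_rayN_le {a b : ℝ} (hab : a < b) {w : ℝ → ℝ} (hw : ContDiff ℝ 1 w)
    (hwa : w a = 0) (hwb : w b = 0) (hE : ∫ x in Ioo a b, w x ^ 2 * gauss x ≠ 0) :
    ∃ z : ℝ → ℝ, ContDiff ℝ 1 z ∧ ∫ x in Ioo a b, z x * gauss x = 0 ∧
      ∫ x in Ioo a b, z x ^ 2 * gauss x ≠ 0 ∧ RayN a b z ≤ RayN a b w + 1 := by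
  obtain ⟨z, hzw, hmean⟩ := exists_hasDerivAt_integral_mul_gauss_eq_zero hab hw.continuous
  have hdz : deriv z = w := funext fun x => (hzw x).deriv
  have hz : ContDiff ℝ 1 z :=
    contDiff_one_iff_deriv.2 ⟨fun x => (hzw x).differentiableAt, hdz ▸ hw.continuous⟩
  have hCS : (∫ x in Ioo a b, w x ^ 2 * gauss x) ^ 2 ≤ (∫ x in Ioo a b, z x ^ 2 * gauss x) *
      ((∫ x in Ioo a b, deriv w x ^ 2 * gauss x) + ∫ x in Ioo a b, w x ^ 2 * gauss x) := by
    calc (∫ x in Ioo a b, w x ^ 2 * gauss x) ^ 2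
        = (∫ x in Ioo a b, z x * gaussDiv w x * gauss x) ^ 2 := by
          rw [← integral_deriv_mul_mul_gauss hab.le hz hw hwa hwb, hdz]; simp only [sq]
      _ ≤ (∫ x in Ioo a b, z x ^ 2 * gauss x) * ∫ x in Ioo a b, gaussDiv w x ^ 2 * gauss x :=
          sq_integral_mul_gauss_le hz.continuous hw.continuous_gaussDiv
      _ = _ := by rw [integral_gaussDiv_sq hab.le hw hwa hwb]
  have hEpos := (integral_sq_mul_gauss_nonneg a b w).lt_of_ne' hE
  have hZpos : 0 < ∫ x in Ioo a b, z x ^ 2 * gauss x := by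
    nlinarith [integral_sq_mul_gauss_nonneg a b z, integral_sq_mul_gauss_nonneg a b (deriv w)]
  refine ⟨z, hz, hmean, hZpos.ne', ?_⟩
  rw [RayN, RayN, hdz, div_add_one hE, div_le_div_iff₀ hZpos hEpos]
  nlinarith

lemma dirEig_add_one_le_rayN {a b : ℝ} (hab : a ≤ b) {z : ℝ → ℝ} (hz : ContDiff ℝ 1 z)
    (hmean : ∫ x in Ioo a b, z x * gauss x = 0) (hZ : ∫ x in Ioo a b, z x ^ 2 * gauss x ≠ 0) :
    dirEig a b + 1 ≤ RayN a b z := by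
  obtain ⟨w, hw, hwa, hwb, hδ⟩ := exists_gaussDiv_eq hab hz.continuous hmean
  have hZ_eq : ∫ x in Ioo a b, z x ^ 2 * gauss x
      = (∫ x in Ioo a b, deriv w x ^ 2 * gauss x) + ∫ x in Ioo a b, w x ^ 2 * gauss x := by
    rw [← integral_gaussDiv_sq hab hw hwa hwb, hδ]
  have hCS : (∫ x in Ioo a b, z x ^ 2 * gauss x) ^ 2
      ≤ (∫ x in Ioo a b, deriv z x ^ 2 * gauss x) * ∫ x in Ioo a b, w x ^ 2 * gauss x := by
    calc (∫ x in Ioo a b, z x ^ 2 * gauss x) ^ 2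
        = (∫ x in Ioo a b, deriv z x * w x * gauss x) ^ 2 := by
          rw [integral_deriv_mul_mul_gauss hab hz hw hwa hwb, hδ]; simp only [sq]
      _ ≤ _ := sq_integral_mul_gauss_le (hz.continuous_deriv le_rfl) hw.continuous
  have hZpos := (integral_sq_mul_gauss_nonneg a b z).lt_of_ne' hZ
  have hEpos : 0 < ∫ x in Ioo a b, w x ^ 2 * gauss x := by
    nlinarith [integral_sq_mul_gauss_nonneg a b w, integral_sq_mul_gauss_nonneg a b (deriv z)]
  have hdir : dirEig a b * (∫ x in Ioo a b, w x ^ 2 * gauss x)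
      ≤ ∫ x in Ioo a b, deriv w x ^ 2 * gauss x :=
    (le_div_iff₀ hEpos).1 (dirEig_le hw hwa hwb hEpos.ne')
  rw [RayN, le_div_iff₀ hZpos]
  nlinarith [dirEig_nonneg a b, integral_sq_mul_gauss_nonneg a b (deriv z)]

/-- `μ₁(a,b) = λ₁(a,b) + 1`: the first nontrivial Neumann eigenvalue of the 1D Hermite
operator equals the first Dirichlet eigenvalue plus one. -/
theorem stmt3 (a b : ℝ) (h : a < b) : neuEig a b = dirEig a b + 1 := by
  obtain ⟨w₀, hw₀, hw₀a, hw₀b, hE₀⟩ := exists_dirichlet_test h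
  obtain ⟨z₀, hz₀, hmean₀, hZ₀, -⟩ := exists_neumann_test_rayN_le h hw₀ hw₀a hw₀b hE₀
  refine le_antisymm ?_ (le_neuEig ⟨z₀, hz₀, hmean₀, hZ₀⟩ fun z hz hmean hZ =>
    dirEig_add_one_le_rayN h.le hz hmean hZ)
  rw [← sub_le_iff_le_add]
  refine le_dirEig ⟨w₀, hw₀, hw₀a, hw₀b, hE₀⟩ fun w hw hwa hwb hE => ?_
  obtain ⟨z, hz, hmean, hZ, hle⟩ := exists_neumann_test_rayN_le h hw hwa hwb hE
  linarith [neuEig_le hz hmean hZ]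
end

section
/- Under reflection of a point (x,y) through the graph of a concave function p along the normal, with reflected point (x_e, y_e) at distance r̄ from the boundary, the Gaussian weights compare as: -‖(x_e,y_e)‖² + x² + y² = (4r̄/√(1 + p'(x_m)²)) (x_m p'(x_m) - p(x_m)); moreover if p is concave and even (so p attains its max at 0), then x_m p'(x_m) - p(x_m) ≤ -p(0), whence e^{(-‖(x_e,y_e)‖² + x² + y²)/2} ≤ max{1, e^{-2 r̃ p(0)}} for r̄ ∈ [0, r̃]. -/
open Real

/-- Comparison of Gaussian weights under normal reflection through the graph of a concave
even function `p`: if `(x,y) = (x_m, p(x_m)) - r̄ ν` and `(x_e,y_e) = (x_m, p(x_m)) + r̄ ν`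
with `ν = (-p'(x_m), 1)/√(1+p'(x_m)²)`, then
`-‖(x_e,y_e)‖² + x² + y² = (4r̄/√(1+p'(x_m)²)) (x_m p'(x_m) - p(x_m))`; moreover
`x_m p'(x_m) - p(x_m) ≤ -p(0)` and hence
`e^{(-‖(x_e,y_e)‖² + x² + y²)/2} ≤ max{1, e^{-2 r̃ p(0)}}` for `0 ≤ r̄ ≤ r̃`. -/
theorem stmt13 (p : ℝ → ℝ) (hdiff : Differentiable ℝ p)
    (hconc : ConcaveOn ℝ Set.univ p) (heven : ∀ x : ℝ, p (-x) = p x)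
    (xm rbar rtil : ℝ) (hr0 : 0 ≤ rbar) (hrr : rbar ≤ rtil) :
    let s : ℝ := Real.sqrt (1 + (deriv p xm)^2)
    let x : ℝ := xm + rbar * deriv p xm / s
    let y : ℝ := p xm - rbar / s
    let xe : ℝ := xm - rbar * deriv p xm / s
    let ye : ℝ := p xm + rbar / s
    (-(xe^2 + ye^2) + x^2 + y^2 = 4 * rbar / s * (xm * deriv p xm - p xm)) ∧
    (xm * deriv p xm - p xm ≤ -(p 0)) ∧
    Real.exp ((-(xe^2 + ye^2) + x^2 + y^2)/2) ≤ max 1 (Real.exp (-2 * rtil * p 0)) := by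
  intro s x y xe ye
  have hs1 : (1:ℝ) ≤ s := by
    rw [show (1:ℝ) = Real.sqrt 1 by simp]
    exact Real.sqrt_le_sqrt (by nlinarith [sq_nonneg (deriv p xm)])
  have hs : 0 < s := lt_of_lt_of_le one_pos hs1
  have heq : -(xe^2 + ye^2) + x^2 + y^2 = 4 * rbar / s * (xm * deriv p xm - p xm) := by
    show -((xm - rbar * deriv p xm / s)^2 + (p xm + rbar / s)^2)
        + (xm + rbar * deriv p xm / s)^2 + (p xm - rbar / s)^2
        = 4 * rbar / s * (xm * deriv p xm - p xm)
    field_simp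
    ring
  have htan : xm * deriv p xm - p xm ≤ -(p 0) := by
    rcases lt_trichotomy xm 0 with h | h | h
    · have := hconc.slope_le_of_hasDerivAt (Set.mem_univ xm) (Set.mem_univ 0) h
        (hdiff xm).hasDerivAt
      rw [slope_def_field] at this
      have hx : 0 < -xm := by linarith
      rw [div_le_iff₀ (by linarith : (0:ℝ) < 0 - xm)] at this
      nlinarith
    · simp [h]
    · have := hconc.deriv_le_slope (Set.mem_univ 0) (Set.mem_univ xm) h (hdiff xm)
      rw [slope_def_field] at this
      rw [le_div_iff₀ (by linarith : (0:ℝ) < xm - 0)] at this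
      nlinarith
  refine ⟨heq, htan, ?_⟩
  rw [heq]
  have hrs : 0 ≤ rbar / s := div_nonneg hr0 hs.le
  have key : 4 * rbar / s * (xm * deriv p xm - p xm) / 2 ≤ 2 * (rbar / s) * (-(p 0)) := by
    have : 4 * rbar / s * (xm * deriv p xm - p xm) / 2
        = 2 * (rbar / s) * (xm * deriv p xm - p xm) := by ring
    rw [this]
    exact mul_le_mul_of_nonneg_left htan (by linarith)
  rcases le_or_gt 0 (p 0) with hp | hp
  · refine le_max_of_le_left ?_
    rw [show (1:ℝ) = Real.exp 0 by simp]
    apply Real.exp_le_exp.mpr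
    have : 2 * (rbar / s) * (-(p 0)) ≤ 0 := by
      apply mul_nonpos_of_nonneg_of_nonpos (by linarith) (by linarith)
    linarith
  · refine le_max_of_le_right ?_
    apply Real.exp_le_exp.mpr
    have hle : rbar / s ≤ rtil := le_trans (by
      rw [div_le_iff₀ hs]; nlinarith) hrr
    have : 2 * (rbar / s) * (-(p 0)) ≤ 2 * rtil * (-(p 0)) := by
      apply mul_le_mul_of_nonneg_right (by linarith) (by linarith)
    linarith
end
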